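/- arXiv:1809.10123 — 2 statements merged into one kernel-verified Lean document; each statement's English description precedes it below -/
import Mathlib

section
/- Let d ≥ 1 and let μ_1, …, μ_d : [0,T] → (0,1] be continuous with Σ_{i=1}^d μ_i(t) = 1 for every t ∈ [0,T]; let M_i(t) := max_{0 ≤ s ≤ t} μ_i(s). Let p ≥ 1 satisfy −Σ_{i=1}^d μ_i(t) log( p M_i(t) ) ≥ 0 for all t ∈ [0,T], and define V(t) := −Σ_{i=1}^d μ_i(t) log( p M_i(t) ) + Σ_{i=1}^d M_i(t) − 1. Fix 0 < T* ≤ T and assume Σ_{i=1}^d M_i(T*) > 1 − Σ_{i=1}^d μ_i(0) log( p μ_i(0) ). Then V(t) ≥ 0 for all t ∈ [0,T], and V(t) > V(0) = −Σ_{i=1}^d μ_i(0) log( p μ_i(0) ) for every t ∈ [T*, T]. (Example 6.2: the strategy additively generated by the entropy functional with running maximum is strong arbitrage relative to the market over every horizon [0,t] with T* ≤ t ≤ T.) -/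
/-!
Since each running maximum dominates its weight, `Σ_i M_i(t) ≥ Σ_i μ_i(t) = 1`, so `V ≥ G ≥ 0`.
At `t = 0` the running maxima are the weights themselves, which gives `V(0)`. For `t ≥ T*`,
monotonicity of the running maxima and `G(t) ≥ 0` give `V(t) ≥ Σ_i M_i(T*) - 1 > V(0)`.
-/

open Set

noncomputable def runMax (f : ℝ → ℝ) (t : ℝ) : ℝ :=
  sSup (f '' Set.Icc (0:ℝ) t)

section RunningMaximum

variable {f : ℝ → ℝ} {T : ℝ}

theorem runMax_zero (f : ℝ → ℝ) : runMax f 0 = f 0 := by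
  rw [runMax, Icc_self, image_singleton, csSup_singleton]

theorem le_runMax (hf : BddAbove (f '' Icc 0 T)) {t : ℝ} (ht : t ∈ Icc 0 T) :
    f t ≤ runMax f t :=
  le_csSup (hf.mono (image_mono (Icc_subset_Icc le_rfl ht.2))) ⟨t, ⟨ht.1, le_rfl⟩, rfl⟩

theorem monotoneOn_runMax (hf : BddAbove (f '' Icc 0 T)) : MonotoneOn (runMax f) (Icc 0 T) :=
  fun _ hs _ ht hst =>
    csSup_le_csSup (hf.mono (image_mono (Icc_subset_Icc le_rfl ht.2)))
      ((nonempty_Icc.2 hs.1).image f) (image_mono (Icc_subset_Icc le_rfl hst))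

theorem one_le_sum_runMax {ι : Type*} [Fintype ι] {f : ι → ℝ → ℝ}
    (hf : ∀ i, BddAbove (f i '' Icc 0 T)) {t : ℝ} (ht : t ∈ Icc 0 T) (hsum : ∑ i, f i t = 1) :
    1 ≤ ∑ i, runMax (f i) t :=
  hsum ▸ Finset.sum_le_sum fun i _ => le_runMax (hf i) ht

end RunningMaximum

theorem entropy_with_running_maximum_arbitrage_general
    (T Tstar : ℝ) (hTstar : 0 < Tstar) (hTstarT : Tstar ≤ T)
    (d : ℕ) (w : Fin d → ℝ → ℝ)
    (hw_mem : ∀ i, ∀ t ∈ Set.Icc (0:ℝ) T, w i t ∈ Set.Ioc (0:ℝ) 1)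
    (hw_sum : ∀ t ∈ Set.Icc (0:ℝ) T, ∑ i, w i t = 1)
    (M : Fin d → ℝ → ℝ) (hM : ∀ i t, M i t = runMax (w i) t)
    (p : ℝ)
    (hGnonneg : ∀ t ∈ Set.Icc (0:ℝ) T,
      0 ≤ -∑ i, w i t * Real.log (p * M i t))
    (V : ℝ → ℝ)
    (hV : ∀ t, V t = (-∑ i, w i t * Real.log (p * M i t)) + (∑ i, M i t) - 1)
    (harb : ∑ i, M i Tstar > 1 - ∑ i, w i 0 * Real.log (p * w i 0)) :
    (∀ t ∈ Set.Icc (0:ℝ) T, 0 ≤ V t) ∧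
      V 0 = -∑ i, w i 0 * Real.log (p * w i 0) ∧
      ∀ t ∈ Set.Icc Tstar T, V 0 < V t := by
  have hbdd : ∀ i, BddAbove (w i '' Icc 0 T) :=
    fun i => ⟨1, forall_mem_image.2 fun s hs => (hw_mem i s hs).2⟩
  have hΓ : ∀ t ∈ Icc 0 T, 1 ≤ ∑ i, M i t := fun t ht => by
    simpa only [hM] using one_le_sum_runMax hbdd ht (hw_sum t ht)
  have h0 : (0 : ℝ) ∈ Icc 0 T := ⟨le_rfl, hTstar.le.trans hTstarT⟩
  have hV0 : V 0 = -∑ i, w i 0 * Real.log (p * w i 0) := by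
    simp only [hV, hM, runMax_zero, hw_sum 0 h0]
    ring
  refine ⟨fun t ht => ?_, hV0, fun t ht => ?_⟩
  · linarith [hV t, hGnonneg t ht, hΓ t ht]
  · have htT : t ∈ Icc 0 T := ⟨hTstar.le.trans ht.1, ht.2⟩
    have hTstar_mem : Tstar ∈ Icc 0 T := ⟨hTstar.le, hTstarT⟩
    have hM_mono : ∑ i, M i Tstar ≤ ∑ i, M i t := Finset.sum_le_sum fun i _ => by
      simpa only [hM] using monotoneOn_runMax (hbdd i) hTstar_mem htT ht.1
    linarith [hV t, hGnonneg t htT]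

/-- Example 6.2: the strategy additively generated by the entropy functional
with running maximum, `G(t, μ, μ*) = −log p − Σ_i μ_i(t) log μ*_i(t)`, with
value process `V = G + Γ^G` where `Γ^G(t) = Σ_i μ*_i(t) − 1`, is strong
arbitrage relative to the market over every horizon `[0,t]` with `T* ≤ t ≤ T`. -/
theorem entropy_with_running_maximum_arbitrage
    (T Tstar : ℝ) (hTstar : 0 < Tstar) (hTstarT : Tstar ≤ T)
    (d : ℕ) (hd : 1 ≤ d) (w : Fin d → ℝ → ℝ)
    (hw_cont : ∀ i, ContinuousOn (w i) (Set.Icc (0:ℝ) T))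
    (hw_mem : ∀ i, ∀ t ∈ Set.Icc (0:ℝ) T, w i t ∈ Set.Ioc (0:ℝ) 1)
    (hw_sum : ∀ t ∈ Set.Icc (0:ℝ) T, ∑ i, w i t = 1)
    (M : Fin d → ℝ → ℝ) (hM : ∀ i t, M i t = runMax (w i) t)
    (p : ℝ) (hp : 1 ≤ p)
    (hGnonneg : ∀ t ∈ Set.Icc (0:ℝ) T,
      0 ≤ -∑ i, w i t * Real.log (p * M i t))
    (V : ℝ → ℝ)
    (hV : ∀ t, V t = (-∑ i, w i t * Real.log (p * M i t)) + (∑ i, M i t) - 1)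
    (harb : ∑ i, M i Tstar > 1 - ∑ i, w i 0 * Real.log (p * w i 0)) :
    (∀ t ∈ Set.Icc (0:ℝ) T, 0 ≤ V t) ∧
      V 0 = -∑ i, w i 0 * Real.log (p * w i 0) ∧
      ∀ t ∈ Set.Icc Tstar T, V 0 < V t :=
  entropy_with_running_maximum_arbitrage_general T Tstar hTstar hTstarT d w hw_mem hw_sum M hM p
    hGnonneg V hV harb
end

section
/- Let r > 0, T > 0, and let f : ℝ → ℝ be continuous with 0 < f(t) ≤ 1/(r e) for all t ∈ [0,T]. Let m be the running minimum of f on [0,T], extended constantly outside [0,T], with Lebesgue–Stieltjes measure μ_{−m} of the nondecreasing function −m, and let li_r(x) := ∫_0^x du/log(ru). Then for every t ∈ [0,T]: ∫_{(0,t]} ( 1 + 1/log( r m(s) ) ) dμ_{−m}(s) = ( m(0) − m(t) ) + ( li_r(m(0)) − li_r(m(t)) ). Moreover, the integrand satisfies 0 ≤ 1 + 1/log(r m(s)) ≤ 1 for all s, so the function t ↦ ( m(t) − m(0) ) + ( li_r(m(t)) − li_r(m(0)) ) is nonincreasing in t. -/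
/-!
Pushing the Stieltjes measure of `-m` on `(0, t]` forward along `-m` gives Lebesgue measure on
`(-m 0, -m t]`: for a continuous monotone `g`, the part of `(a, b]` where `g ≤ d` is an interval
`(a, v]` with `g v = min (g b) d`, by the intermediate value theorem. The integral thus becomes
`∫_{m t}^{m 0} (1 + 1/log(ru)) du`. Since `m` takes values in `(0, 1/(re)]`, where
`log(ru) ≤ -1`, the integrand lies in `[0, 1]`, and `x ↦ x + li_r x` is monotone there.
-/

open MeasureTheory

/-- The running minimum of `f` on `[0, T]`, extended constantly outside `[0, T]`. -/
noncomputable def runMin (f : ℝ → ℝ) (T t : ℝ) : ℝ :=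
  sInf (f '' Set.Icc (0:ℝ) (max 0 (min t T)))

/-- `li_r(x) := ∫_0^x du / log(ru)`. -/
noncomputable def lir (r x : ℝ) : ℝ :=
  ∫ u in (0:ℝ)..x, (Real.log (r * u))⁻¹

open Set

section RunMin

lemma runMin_eq_sInf_image_Icc_zero_one (f : ℝ → ℝ) (T t : ℝ) :
    runMin f T t = sInf ((fun s => f (max 0 (min t T) * s)) '' Icc 0 1) := by
  rw [runMin, ← image_image f (max 0 (min t T) * ·),
    image_mul_left_Icc (le_max_left _ _) zero_le_one, mul_zero, mul_one]

variable {f : ℝ → ℝ} {T : ℝ}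

-- Rescaling to the fixed interval `[0, 1]` makes `IsCompact.continuous_sInf` applicable.
lemma continuous_runMin (hf : Continuous f) : Continuous (runMin f T) := by
  simp_rw [funext (runMin_eq_sInf_image_Icc_zero_one f T)]
  exact isCompact_Icc.continuous_sInf (by fun_prop)

lemma antitone_runMin (hf : Continuous f) : Antitone (runMin f T) := fun _ _ hst =>
  csInf_le_csInf (isCompact_Icc.image hf).bddBelow
    ((nonempty_Icc.2 (le_max_left _ _)).image f)
    (image_mono (Icc_subset_Icc le_rfl (max_le_max le_rfl (min_le_min_right _ hst))))

lemma runMin_mem_image (hf : Continuous f) (hT : 0 ≤ T) (t : ℝ) :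
    runMin f T t ∈ f '' Icc 0 T :=
  image_mono (Icc_subset_Icc le_rfl (max_le hT (min_le_right _ _)))
    ((isCompact_Icc.image hf).sInf_mem ((nonempty_Icc.2 (le_max_left _ _)).image f))

end RunMin

section Stieltjes

variable {g : ℝ → ℝ} {a b : ℝ}

lemma exists_preimage_Iic_inter_Ioc_eq_Ioc (hg : ContinuousOn g (Icc a b))
    (hmono : MonotoneOn g (Icc a b)) (hab : a ≤ b) {d : ℝ} (hd : g a ≤ d) :
    ∃ v ∈ Icc a b, g ⁻¹' Iic d ∩ Ioc a b = Ioc a v ∧ g v = min (g b) d := by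
  set S := Icc a b ∩ g ⁻¹' Iic d
  have hS : IsClosed S := hg.preimage_isClosed_of_isClosed isClosed_Icc isClosed_Iic
  have hSbdd : BddAbove S := bddAbove_Icc.mono inter_subset_left
  have hv : sSup S ∈ S := hS.csSup_mem ⟨a, left_mem_Icc.2 hab, hd⟩ hSbdd
  refine ⟨sSup S, hv.1, ?_, ?_⟩
  · ext s
    refine ⟨fun ⟨hsd, hs⟩ => ⟨hs.1, le_csSup hSbdd ⟨Ioc_subset_Icc_self hs, hsd⟩⟩,
      fun hs => ⟨?_, hs.1, hs.2.trans hv.1.2⟩⟩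
    exact (hmono ⟨hs.1.le, hs.2.trans hv.1.2⟩ hv.1 hs.2).trans hv.2
  · obtain ⟨w, hw, hgw⟩ := intermediate_value_Icc hab hg
      ⟨le_min (hmono (left_mem_Icc.2 hab) (right_mem_Icc.2 hab) hab) hd, min_le_left _ _⟩
    have hwv : w ≤ sSup S := le_csSup hSbdd ⟨hw, hgw.trans_le (min_le_right _ _)⟩
    exact le_antisymm (le_min (hmono hv.1 (right_mem_Icc.2 hab) hv.1.2) hv.2)
      (hgw ▸ hmono hw hv.1 hwv)

variable {μ : Measure ℝ}

theorem map_restrict_Ioc_eq_volume_restrict (hg : Continuous g) (hmono : Monotone g)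
    (hμ : ∀ a b, a ≤ b → μ (Ioc a b) = ENNReal.ofReal (g b - g a)) (hab : a ≤ b) :
    (μ.restrict (Ioc a b)).map g = volume.restrict (Ioc (g a) (g b)) := by
  have : IsFiniteMeasure (μ.restrict (Ioc a b)) :=
    isFiniteMeasure_restrict.2 (by rw [hμ a b hab]; exact ENNReal.ofReal_ne_top)
  refine Measure.ext_of_Iic _ _ fun d => ?_
  rw [Measure.map_apply hg.measurable measurableSet_Iic,
    Measure.restrict_apply (hg.measurable measurableSet_Iic),
    Measure.restrict_apply measurableSet_Iic, inter_comm (Iic d), Ioc_inter_Iic, Real.volume_Ioc]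
  rcases lt_or_ge d (g a) with hd | hd
  · have hempty : g ⁻¹' Iic d ∩ Ioc a b = ∅ :=
      eq_empty_of_forall_notMem fun s ⟨hsd, hs⟩ => hd.not_ge ((hmono hs.1.le).trans hsd)
    rw [hempty, measure_empty, ENNReal.ofReal_of_nonpos]
    linarith [min_le_right (g b) d]
  · obtain ⟨v, hv, hpre, hgv⟩ :=
      exists_preimage_Iic_inter_Ioc_eq_Ioc hg.continuousOn (hmono.monotoneOn _) hab hd
    rw [hpre, hμ a v hv.1, hgv]

theorem setIntegral_Ioc_comp_eq_intervalIntegral (hg : Continuous g) (hmono : Monotone g)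
    (hμ : ∀ a b, a ≤ b → μ (Ioc a b) = ENNReal.ofReal (g b - g a)) (hab : a ≤ b)
    {φ : ℝ → ℝ} (hφ : AEStronglyMeasurable φ) :
    ∫ s in Ioc a b, φ (g s) ∂μ = ∫ x in g a..g b, φ x := by
  have hmap := map_restrict_Ioc_eq_volume_restrict hg hmono hμ hab
  rw [← integral_map hg.aemeasurable (hmap ▸ hφ.restrict), hmap,
    intervalIntegral.integral_of_le (hmono hab)]

end Stieltjes

section LogIntegral

variable {r : ℝ}

lemma one_add_inv_log_mul_mem_Icc (hr : 0 < r) {x : ℝ} (hx : x ∈ Icc 0 (1 / (r * Real.exp 1))) :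
    1 + (Real.log (r * x))⁻¹ ∈ Icc 0 1 := by
  rcases hx.1.eq_or_lt with rfl | hx0
  · simp -- `Real.log 0 = 0`, so the value is `1`.
  have hlog : Real.log (r * x) ≤ -1 := by
    rw [Real.log_le_iff_le_exp (by positivity), Real.exp_neg]
    calc r * x ≤ r * (1 / (r * Real.exp 1)) := by gcongr; exact hx.2
      _ = (Real.exp 1)⁻¹ := by field_simp
  have hinv : -1 ≤ (Real.log (r * x))⁻¹ := by
    rw [neg_le, ← inv_neg]
    exact inv_le_one_of_one_le₀ (by linarith)
  exact ⟨by linarith, by linarith [inv_lt_zero.2 (show Real.log (r * x) < 0 by linarith)]⟩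

lemma intervalIntegrable_inv_log_mul (hr : 0 < r) {a b : ℝ}
    (ha : a ∈ Icc 0 (1 / (r * Real.exp 1))) (hb : b ∈ Icc 0 (1 / (r * Real.exp 1))) :
    IntervalIntegrable (fun u => (Real.log (r * u))⁻¹) volume a b := by
  rw [intervalIntegrable_iff]
  refine Measure.integrableOn_of_bounded (M := 1) measure_Ioc_lt_top.ne
    (by fun_prop : Measurable fun u => (Real.log (r * u))⁻¹).aestronglyMeasurable
    ((ae_restrict_iff' measurableSet_uIoc).2 (ae_of_all _ fun u hu => ?_))
  have hu' : u ∈ Icc 0 (1 / (r * Real.exp 1)) :=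
    uIcc_subset_Icc ha hb (uIoc_subset_uIcc hu)
  have h := one_add_inv_log_mul_mem_Icc hr hu'
  rw [Real.norm_eq_abs, abs_le]
  exact ⟨by linarith [h.1], by linarith [h.2]⟩

lemma integral_one_add_inv_log_mul (hr : 0 < r) {a b : ℝ}
    (ha : a ∈ Icc 0 (1 / (r * Real.exp 1))) (hb : b ∈ Icc 0 (1 / (r * Real.exp 1))) :
    ∫ x in a..b, (1 + (Real.log (r * x))⁻¹) = (b - a) + (lir r b - lir r a) := by
  have h0 : (0 : ℝ) ∈ Icc 0 (1 / (r * Real.exp 1)) := ⟨le_rfl, by positivity⟩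
  rw [intervalIntegral.integral_add intervalIntegrable_const
      (intervalIntegrable_inv_log_mul hr ha hb), intervalIntegral.integral_const, smul_eq_mul,
    mul_one, lir, lir, intervalIntegral.integral_interval_sub_left
      (intervalIntegrable_inv_log_mul hr h0 hb) (intervalIntegrable_inv_log_mul hr h0 ha)]

lemma monotoneOn_add_lir (hr : 0 < r) :
    MonotoneOn (fun x => x + lir r x) (Icc 0 (1 / (r * Real.exp 1))) := by
  intro a ha b hb hab
  have hnonneg : 0 ≤ ∫ x in a..b, (1 + (Real.log (r * x))⁻¹) :=
    intervalIntegral.integral_nonneg hab fun x hx =>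
      (one_add_inv_log_mul_mem_Icc hr ⟨ha.1.trans hx.1, hx.2.trans hb.2⟩).1
  rw [integral_one_add_inv_log_mul hr ha hb] at hnonneg
  dsimp only
  linarith

end LogIntegral

/-- Evaluation of the Gamma functional of Example 6.4:
`∫_{(0,t]} (1 + 1/log(r m(s))) d(−m)(s) = (m(0) − m(t)) + (li_r(m(0)) − li_r(m(t)))`,
the integrand lies in `[0, 1]`, and `t ↦ (m(t) − m(0)) + (li_r(m(t)) − li_r(m(0)))`
is nonincreasing. -/
theorem gamma_functional_iterated_entropy
    (r T : ℝ) (hr : 0 < r) (hT : 0 < T)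
    (f : ℝ → ℝ) (hf : Continuous f)
    (hf_mem : ∀ t ∈ Set.Icc (0:ℝ) T, f t ∈ Set.Ioc (0:ℝ) (1 / (r * Real.exp 1)))
    (μm : Measure ℝ)
    (hμm : ∀ a b : ℝ, a ≤ b →
      μm (Set.Ioc a b) = ENNReal.ofReal ((-(runMin f T b)) - (-(runMin f T a)))) :
    (∀ t ∈ Set.Icc (0:ℝ) T,
      ∫ s in Set.Ioc (0:ℝ) t, (1 + (Real.log (r * runMin f T s))⁻¹) ∂μm
        = (runMin f T 0 - runMin f T t) + (lir r (runMin f T 0) - lir r (runMin f T t))) ∧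
    (∀ s : ℝ, 1 + (Real.log (r * runMin f T s))⁻¹ ∈ Set.Icc (0:ℝ) 1) ∧
    AntitoneOn (fun t => (runMin f T t - runMin f T 0)
      + (lir r (runMin f T t) - lir r (runMin f T 0))) (Set.Icc (0:ℝ) T) := by
  set m := runMin f T
  have hm_mem (s : ℝ) : m s ∈ Icc 0 (1 / (r * Real.exp 1)) := by
    obtain ⟨x, hx, hfx⟩ := runMin_mem_image hf hT.le s
    exact Ioc_subset_Icc_self (hfx ▸ hf_mem x hx :)
  refine ⟨fun t ht => ?_, fun s => one_add_inv_log_mul_mem_Icc hr (hm_mem s), ?_⟩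
  · calc ∫ s in Ioc 0 t, (1 + (Real.log (r * m s))⁻¹) ∂μm
        = ∫ s in Ioc 0 t, (1 + (Real.log (r * -(-m s)))⁻¹) ∂μm := by simp only [neg_neg]
      _ = ∫ x in -m 0..-m t, (1 + (Real.log (r * -x))⁻¹) :=
          setIntegral_Ioc_comp_eq_intervalIntegral (continuous_runMin hf).neg
            (antitone_runMin hf).neg hμm ht.1
            (by fun_prop : Measurable fun x => 1 + (Real.log (r * -x))⁻¹).aestronglyMeasurable
      _ = ∫ x in m t..m 0, (1 + (Real.log (r * x))⁻¹) := by
          rw [intervalIntegral.integral_comp_neg (fun x => 1 + (Real.log (r * x))⁻¹), neg_neg,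
            neg_neg]
      _ = _ := integral_one_add_inv_log_mul hr (hm_mem t) (hm_mem 0)
  · intro t₁ _ t₂ _ ht
    have := monotoneOn_add_lir hr (hm_mem t₂) (hm_mem t₁) (antitone_runMin hf ht)
    dsimp only at this ⊢
    linarith
end
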